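/- arXiv:2508.14524 — 3 statements merged into one kernel-verified Lean document; each statement's English description precedes it below -/
import Mathlib

section
/- Conversely, if w equals the maximum absolute value over all contiguous partial sums of the signed transaction sequence (d_1, ..., d_n), then there exists an initial nonnegative split (b_v, b_u) with b_v + b_u = w such that every transaction in the sequence can be accepted while keeping both balances nonnegative. -/
open Finset

/-- The paper's `M`, with `d` indexed from `0`; pairs `k > j` contribute `0`, the empty sum. -/
noncomputable def maxWindowSum (n : ℕ) (d : ℕ → ℝ) : ℝ :=
  (Finset.range (n + 1) ×ˢ Finset.range (n + 1)).sup'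
    ((Finset.nonempty_range_iff.mpr (Nat.succ_ne_zero n)).product
      (Finset.nonempty_range_iff.mpr (Nat.succ_ne_zero n)))
    (fun p => if p.1 ≤ p.2 then |∑ i ∈ Finset.Ico p.1 p.2, d i| else 0)

lemma abs_sum_Ico_le_maxWindowSum {n k j : ℕ} (d : ℕ → ℝ) (hkj : k ≤ j) (hj : j ≤ n) :
    |∑ i ∈ Ico k j, d i| ≤ maxWindowSum n d := by
  have hmem : (k, j) ∈ range (n + 1) ×ˢ range (n + 1) := by
    simp only [mem_product, mem_range]
    omega
  have := le_sup' (fun p : ℕ × ℕ =>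
    if p.1 ≤ p.2 then |∑ i ∈ Ico p.1 p.2, d i| else 0) hmem
  rwa [if_pos hkj] at this

lemma abs_sum_range_sub_sum_range_le_maxWindowSum {n j k : ℕ} (d : ℕ → ℝ)
    (hj : j ≤ n) (hk : k ≤ n) :
    |∑ i ∈ range j, d i - ∑ i ∈ range k, d i| ≤ maxWindowSum n d := by
  rcases le_total k j with hkj | hjk
  · rw [← sum_Ico_eq_sub _ hkj]
    exact abs_sum_Ico_le_maxWindowSum d hkj hj
  · rw [abs_sub_comm, ← sum_Ico_eq_sub _ hjk]
    exact abs_sum_Ico_le_maxWindowSum d hjk hk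

/-- The shift `b = -min_s S` moves the minimum of `S` to `0`; the spread bound then keeps every
shifted value below `w`. -/
lemma exists_add_mem_Icc_of_sub_le {ι : Type*} {s : Finset ι} (hs : s.Nonempty) (S : ι → ℝ)
    {w : ℝ} (hS : ∀ j ∈ s, ∀ k ∈ s, S j - S k ≤ w) :
    ∃ b : ℝ, ∀ j ∈ s, b + S j ∈ Set.Icc 0 w := by
  obtain ⟨k, hk, hmin⟩ := exists_mem_eq_inf' hs S
  refine ⟨-s.inf' hs S, fun j hj => ⟨?_, ?_⟩⟩
  · linarith [inf'_le S hj]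
  · linarith [hS j hj k hk]

/-- If `w` equals the maximum absolute value over all contiguous partial sums of
the signed transaction sequence `d_1, …, d_n`, then there is an initial
nonnegative split `(b_v, b_u)` with `b_v + b_u = w` such that every transaction
can be accepted while keeping both balances nonnegative. -/
theorem capacity_upper_bound_feasible (n : ℕ) (d : ℕ → ℝ) (w : ℝ)
    (hw : w = (Finset.range (n + 1) ×ˢ Finset.range (n + 1)).sup'
      ((Finset.nonempty_range_iff.mpr (Nat.succ_ne_zero n)).product
        (Finset.nonempty_range_iff.mpr (Nat.succ_ne_zero n)))
      (fun p => if p.1 ≤ p.2 then |∑ i ∈ Finset.Ico p.1 p.2, d i| else 0)) :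
    ∃ bv bu : ℝ, 0 ≤ bv ∧ 0 ≤ bu ∧ bv + bu = w ∧
      ∀ j ≤ n, 0 ≤ bv + ∑ i ∈ Finset.range j, d i ∧
        bv + ∑ i ∈ Finset.range j, d i ≤ w := by
  change w = maxWindowSum n d at hw
  have hspread : ∀ j ∈ range (n + 1), ∀ k ∈ range (n + 1),
      ∑ i ∈ range j, d i - ∑ i ∈ range k, d i ≤ w := fun j hj k hk =>
    hw ▸ (le_abs_self _).trans (abs_sum_range_sub_sum_range_le_maxWindowSum d
      (mem_range_succ_iff.1 hj) (mem_range_succ_iff.1 hk))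
  obtain ⟨bv, hbv⟩ := exists_add_mem_Icc_of_sub_le (nonempty_range_iff.2 n.succ_ne_zero) _ hspread
  have hbv0 : bv ∈ Set.Icc 0 w := by
    simpa only [sum_range_zero, add_zero] using hbv 0 (by simp)
  exact ⟨bv, w - bv, hbv0.1, sub_nonneg.2 hbv0.2, add_sub_cancel _ _,
    fun j hj => hbv j (mem_range_succ_iff.2 hj)⟩
end

section
/- For any connected graph G' of diameter d on vertex set V and any graph G on V, the minimal total capacity needed to accept all transactions of a given sequence when routing in G' is at most d times the minimal total capacity needed when routing in G; formally AC(S, G') ≤ d · AC(S, G). -/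
/-!
Choose, for every ordered pair of vertices, a walk of length at most `d` in `G'`, such that the
walk from `v` to `u` is the reverse of the walk from `u` to `v`; this symmetry keeps the
transported capacities symmetric and the two balances of a channel summing to its capacity.
A solution in `G` is transported to `G'` by sending the capacity and the balances of every
`G`-channel `(u, v)` along the chosen walk from `u` to `v`, and by replacing every hop of a
transaction by the chosen walk between its endpoints. Each quantity on a `G'`-channel is then a
nonnegative combination of quantities on `G`-channels with the same coefficients, so
nonnegativity, the capacity constraints and the balance updates carry over, while each
`G`-channel is paid for at most `d` times.
-/

open Finset

/-- A feasible solution accepting *all* transactions of the sequence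
`(src i, tgt i, amt i)` for `i < n`, routed in the graph `H`: capacities on
channels (edges of `H`), a routing walk for each transaction, and an evolution
of balances that stays nonnegative, where each hop of the walk of transaction
`i` moves `amt i` from the forwarding side to the other side. -/
structure ACSolution {V : Type} [Fintype V] [DecidableEq V] (H : SimpleGraph V)
    (n : ℕ) (src tgt : ℕ → V) (amt : ℕ → ℝ) where
  cap : V → V → ℝ
  cap_symm : ∀ u v, cap u v = cap v u
  cap_nonneg : ∀ u v, 0 ≤ cap u v
  cap_support : ∀ u v, ¬ H.Adj u v → cap u v = 0
  walk : ∀ i : ℕ, H.Walk (src i) (tgt i)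
  bal : ℕ → V → V → ℝ
  bal_nonneg : ∀ i u v, 0 ≤ bal i u v
  bal_cap : ∀ i u v, bal i u v + bal i v u = cap u v
  bal_step : ∀ i < n, ∀ u v : V,
    bal (i + 1) u v = bal i u v
      - amt i * (((walk i).darts.filter (fun dd => dd.toProd = (u, v))).length : ℝ)
      + amt i * (((walk i).darts.filter (fun dd => dd.toProd = (v, u))).length : ℝ)

/-- `AC(S, H)`: the minimal total capacity needed to accept all transactions
when routing in `H` (`⊤` if no feasible solution exists). -/
noncomputable def ACcost {V : Type} [Fintype V] [DecidableEq V] (H : SimpleGraph V)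
    (n : ℕ) (src tgt : ℕ → V) (amt : ℕ → ℝ) : ENNReal :=
  ⨅ sol : ACSolution H n src tgt amt,
    ENNReal.ofReal ((∑ u : V, ∑ v : V, sol.cap u v) / 2)

namespace SimpleGraph.Walk

variable {V : Type*} [DecidableEq V] {G G' : SimpleGraph V}

def dartCount {u v : V} (w : G.Walk u v) (a b : V) : ℕ :=
  (w.darts.filter (fun dd => dd.toProd = (a, b))).length

@[simp]
lemma dartCount_nil {u : V} (a b : V) : (nil : G.Walk u u).dartCount a b = 0 := rfl

@[simp]
lemma dartCount_cons {u v w : V} (h : G.Adj u v) (p : G.Walk v w) (a b : V) :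
    (cons h p).dartCount a b = (if (u, v) = (a, b) then 1 else 0) + p.dartCount a b := by
  unfold dartCount
  split_ifs with hab <;> simp [hab, add_comm]

@[simp]
lemma dartCount_append {u v w : V} (p : G.Walk u v) (p' : G.Walk v w) (a b : V) :
    (p.append p').dartCount a b = p.dartCount a b + p'.dartCount a b := by
  simp [dartCount, darts_append, List.filter_append]

lemma dartCount_reverse {u v : V} (p : G.Walk u v) (a b : V) :
    p.reverse.dartCount a b = p.dartCount b a := by
  induction p with
  | nil => rfl
  | cons h p ih =>
    simp only [reverse_cons, dartCount_append, ih, dartCount_cons, dartCount_nil, Prod.mk.injEq]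
    grind

lemma dartCount_eq_zero_of_not_adj {u v : V} (p : G.Walk u v) {a b : V} (hab : ¬ G.Adj a b) :
    p.dartCount a b = 0 := by
  induction p with
  | nil => rfl
  | cons h p ih =>
    rw [dartCount_cons, ih, if_neg]
    rintro ⟨⟩
    exact hab h

lemma sum_dartCount [Fintype V] {u v : V} (p : G.Walk u v) :
    ∑ a, ∑ b, p.dartCount a b = p.length := by
  induction p with
  | nil => simp
  | cons h p ih =>
    simp [sum_add_distrib, ih, add_comm, ite_and]

def reroute (q : ∀ u v : V, G'.Walk u v) : ∀ {u v : V}, G.Walk u v → G'.Walk u v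
  | _, _, nil => nil
  | _, _, cons _ p => (q _ _).append (p.reroute q)

lemma dartCount_reroute [Fintype V] (q : ∀ u v : V, G'.Walk u v) {u v : V} (p : G.Walk u v)
    (a b : V) :
    (p.reroute q).dartCount a b = ∑ x, ∑ y, p.dartCount x y * (q x y).dartCount a b := by
  induction p with
  | nil => simp [reroute]
  | cons h p ih =>
    simp [reroute, ih, add_mul, sum_add_distrib, ite_mul, ite_and]

end SimpleGraph.Walk

namespace SimpleGraph

variable {V : Type*} {G : SimpleGraph V}

lemma exists_walks_reverse_eq_of_length_le {d : ℕ}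
    (h : ∀ u v : V, ∃ p : G.Walk u v, p.length ≤ d) :
    ∃ q : ∀ u v : V, G.Walk u v, (∀ u v, (q u v).length ≤ d) ∧ ∀ u v, q v u = (q u v).reverse := by
  classical
  choose p hp using h
  let _ : LinearOrder V := WellOrderingRel.isWellOrder.linearOrder
  let q : ∀ u v : V, G.Walk u v := fun u v =>
    if huv : u = v then Walk.nil.copy rfl huv else if u < v then p u v else (p v u).reverse
  refine ⟨q, fun u v => ?_, fun u v => ?_⟩
  · by_cases huv : u = v
    · subst huv; simp [q]
    · by_cases hlt : u < v <;> simp [q, huv, hlt, hp]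
  · by_cases huv : u = v
    · subst huv; simp [q]
    · rcases lt_or_gt_of_ne huv with hlt | hlt <;>
        simp [q, huv, Ne.symm huv, hlt, not_lt_of_gt hlt]

end SimpleGraph

section Routing

open SimpleGraph

variable {V : Type*} [Fintype V] [DecidableEq V] {G G' : SimpleGraph V}
  {R M : Type*} [Semiring R] [AddCommMonoid M] [Module R M]

variable (R) in
def routedLoad (q : ∀ u v : V, G'.Walk u v) : (V → V → M) →ₗ[R] V → V → M where
  toFun f a b := ∑ u, ∑ v, (q u v).dartCount a b • f u v
  map_add' f g := by ext a b; simp [sum_add_distrib]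
  map_smul' r f := by ext a b; simp [smul_sum, smul_comm r]

variable {q : ∀ u v : V, G'.Walk u v}

lemma routedLoad_apply (f : V → V → M) (a b : V) :
    routedLoad R q f a b = ∑ u, ∑ v, (q u v).dartCount a b • f u v := rfl

lemma routedLoad_swap (hq : ∀ u v, q v u = (q u v).reverse) (f : V → V → M) (a b : V) :
    routedLoad R q f b a = routedLoad R q (fun u v => f v u) a b := by
  simp only [routedLoad_apply]
  rw [sum_comm]
  refine sum_congr rfl fun u _ => sum_congr rfl fun v _ => ?_
  rw [hq, Walk.dartCount_reverse]

lemma routedLoad_eq_zero_of_not_adj (f : V → V → M) {a b : V} (hab : ¬ G'.Adj a b) :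
    routedLoad R q f a b = 0 := by
  simp [routedLoad_apply, Walk.dartCount_eq_zero_of_not_adj _ hab]

lemma routedLoad_nonneg [PartialOrder M] [IsOrderedAddMonoid M] {f : V → V → M}
    (hf : ∀ u v, 0 ≤ f u v) (a b : V) : 0 ≤ routedLoad R q f a b :=
  sum_nonneg fun u _ => sum_nonneg fun v _ => nsmul_nonneg (hf u v) _

lemma routedLoad_dartCount {u' v' : V} (p : G.Walk u' v') (a b : V) :
    routedLoad R q (fun u v => (p.dartCount u v : R)) a b = (p.reroute q).dartCount a b := by
  simp only [routedLoad_apply, Walk.dartCount_reroute, nsmul_eq_mul, Nat.cast_sum, Nat.cast_mul]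
  exact sum_congr rfl fun _ _ => sum_congr rfl fun _ _ => Nat.cast_comm _ _

lemma sum_routedLoad (f : V → V → M) :
    ∑ a, ∑ b, routedLoad R q f a b = ∑ u, ∑ v, (q u v).length • f u v := by
  simp only [routedLoad_apply, ← Walk.sum_dartCount, sum_smul]
  exact (sum_congr rfl fun _ _ => sum_comm).trans <| sum_comm.trans <|
    sum_congr rfl fun _ _ => (sum_congr rfl fun _ _ => sum_comm).trans sum_comm

lemma sum_routedLoad_le [PartialOrder M] [IsOrderedAddMonoid M] {d : ℕ}
    (hq : ∀ u v, (q u v).length ≤ d) {f : V → V → M} (hf : ∀ u v, 0 ≤ f u v) :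
    ∑ a, ∑ b, routedLoad R q f a b ≤ d • ∑ u, ∑ v, f u v := by
  rw [sum_routedLoad, smul_sum]
  refine sum_le_sum fun u _ => ?_
  rw [smul_sum]
  exact sum_le_sum fun v _ => nsmul_le_nsmul_left (hf u v) (hq u v)

end Routing

namespace ACSolution

open SimpleGraph

variable {V : Type} [Fintype V] [DecidableEq V] {G G' : SimpleGraph V}
  {n : ℕ} {src tgt : ℕ → V} {amt : ℕ → ℝ}

def ofSubsingleton [Subsingleton V] (H : SimpleGraph V) : ACSolution H n src tgt amt where
  cap _ _ := 0
  cap_symm _ _ := rfl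
  cap_nonneg _ _ := le_rfl
  cap_support _ _ _ := rfl
  walk i := Walk.nil.copy rfl (Subsingleton.elim _ _)
  bal _ _ _ := 0
  bal_nonneg _ _ _ := le_rfl
  bal_cap _ _ _ := add_zero 0
  bal_step i _ u v := by
    obtain rfl := Subsingleton.elim u v
    ring

lemma bal_succ (sol : ACSolution G n src tgt amt) {i : ℕ} (hi : i < n) :
    sol.bal (i + 1) = sol.bal i - amt i • (fun u v => ((sol.walk i).dartCount u v : ℝ))
      + amt i • (fun u v => ((sol.walk i).dartCount v u : ℝ)) := by
  ext u v
  exact sol.bal_step i hi u v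

def reroute (sol : ACSolution G n src tgt amt) (q : ∀ u v : V, G'.Walk u v)
    (hq : ∀ u v, q v u = (q u v).reverse) : ACSolution G' n src tgt amt where
  cap := routedLoad ℝ q sol.cap
  cap_symm a b := by
    have hcap : (fun u v => sol.cap v u) = sol.cap := funext₂ fun u v => sol.cap_symm v u
    rw [routedLoad_swap hq, hcap]
  cap_nonneg := routedLoad_nonneg sol.cap_nonneg
  cap_support _ _ := routedLoad_eq_zero_of_not_adj _
  walk i := (sol.walk i).reroute q
  bal i := routedLoad ℝ q (sol.bal i)
  bal_nonneg i := routedLoad_nonneg (sol.bal_nonneg i)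
  bal_cap i a b := by
    have hcap : sol.bal i + (fun u v => sol.bal i v u) = sol.cap := funext₂ (sol.bal_cap i)
    rw [routedLoad_swap hq (sol.bal i) a b, ← hcap, map_add]
    rfl
  bal_step i hi a b := by
    rw [sol.bal_succ hi]
    simp only [map_add, map_sub, map_smul, Pi.add_apply, Pi.sub_apply, Pi.smul_apply, smul_eq_mul]
    rw [← routedLoad_swap hq (fun u v => ((sol.walk i).dartCount u v : ℝ)), routedLoad_dartCount,
      routedLoad_dartCount]
    rfl

lemma sum_cap_reroute_le (sol : ACSolution G n src tgt amt) {q : ∀ u v : V, G'.Walk u v}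
    (hq : ∀ u v, q v u = (q u v).reverse) {d : ℕ} (hlen : ∀ u v, (q u v).length ≤ d) :
    ∑ a, ∑ b, (sol.reroute q hq).cap a b ≤ d * ∑ u, ∑ v, sol.cap u v := by
  have hle := sum_routedLoad_le (R := ℝ) hlen sol.cap_nonneg
  rwa [nsmul_eq_mul] at hle

end ACSolution

theorem ACcost_le_diam_mul_general {V : Type} [Fintype V] [DecidableEq V]
    (G G' : SimpleGraph V) (d : ℕ) (n : ℕ) (src tgt : ℕ → V) (amt : ℕ → ℝ)
    (hdiam : ∀ u v : V, ∃ p : G'.Walk u v, p.length ≤ d) :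
    ACcost G' n src tgt amt ≤ (d : ENNReal) * ACcost G n src tgt amt := by
  obtain ⟨q, hq_len, hq_rev⟩ := G'.exists_walks_reverse_eq_of_length_le hdiam
  rcases isEmpty_or_nonempty (ACSolution G n src tgt amt) with hG | hG
  · -- `0 * ⊤ = 0` in `ℝ≥0∞`; but `d = 0` leaves at most one vertex, where every graph is feasible.
    have hd : d ≠ 0 := by
      rintro rfl
      have : Subsingleton V :=
        ⟨fun u v => (hdiam u v).elim fun p hp => p.eq_of_length_eq_zero (Nat.le_zero.mp hp)⟩
      exact hG.false (ACSolution.ofSubsingleton G)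
    have htop : ACcost G n src tgt amt = ⊤ := iInf_of_empty _
    rw [htop, ENNReal.mul_top (by exact_mod_cast hd)]
    exact le_top
  unfold ACcost
  rw [ENNReal.mul_iInf' (fun h _ => absurd h (ENNReal.natCast_ne_top d)) (fun _ => hG)]
  refine le_iInf fun sol => (iInf_le _ (sol.reroute q hq_rev)).trans ?_
  calc ENNReal.ofReal ((∑ a, ∑ b, (sol.reroute q hq_rev).cap a b) / 2)
        ≤ ENNReal.ofReal (d * (∑ u, ∑ v, sol.cap u v) / 2) := by
          gcongr
          exact sol.sum_cap_reroute_le hq_rev hq_len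
      _ = d * ENNReal.ofReal ((∑ u, ∑ v, sol.cap u v) / 2) := by
          rw [mul_div_assoc, ENNReal.ofReal_mul (by positivity), ENNReal.ofReal_natCast]

/-- For any graph `G` on `V` and any graph `G'` of diameter at most `d`
(every two vertices are joined by a walk of length at most `d`), the minimal
total capacity accepting all transactions in `G'` is at most `d` times the one
in `G`: `AC(S, G') ≤ d · AC(S, G)`. -/
theorem ACcost_le_diam_mul {V : Type} [Fintype V] [DecidableEq V]
    (G G' : SimpleGraph V) (d : ℕ) (n : ℕ) (src tgt : ℕ → V) (amt : ℕ → ℝ)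
    (hamt : ∀ i < n, 0 < amt i)
    (hdiam : ∀ u v : V, ∃ p : G'.Walk u v, p.length ≤ d) :
    ACcost G' n src tgt amt ≤ (d : ENNReal) * ACcost G n src tgt amt :=
  ACcost_le_diam_mul_general G G' d n src tgt amt hdiam
end

section
/- For any graph G on p ≥ 2 nodes and any transaction sequence S, the star K_{1,p-1} satisfies AC(S, K_{1,p-1}) ≤ 2 · AC(S, G); i.e., the star topology is a 2-approximation of the optimal capacity cost when all transactions must be accepted. -/
open Finset

/-- The star graph with centre `c`: every other node is adjacent exactly to `c`. -/
def starGraph {V : Type} [DecidableEq V] (c : V) : SimpleGraph V where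
  Adj u v := u ≠ v ∧ (u = c ∨ v = c)
  symm := ⟨fun _ _ h => ⟨h.1.symm, h.2.symm⟩⟩
  loopless := ⟨fun _ h => h.1 rfl⟩

/-!
Aggregate a solution on `G` node by node. The funds `φ i u = ∑ v, bal i u v` of node `u` stay
in `[0, κ u]`, where `κ u = ∑ v, cap u v`, and by flow conservation along each routing walk they
change only at the endpoints of the transaction: by `-amt i` at the source and `+amt i` at the
target. A star can reproduce any such node-level schedule, with spoke `u c` of capacity `κ u` and
`φ i u` on `u`'s side, whatever walks it routes along. Its total capacity `∑_{u ≠ c} κ u` is at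
most `∑ u, κ u`, twice the cost of the solution on `G`.
-/

namespace SimpleGraph

variable {V : Type*} [DecidableEq V] {G : SimpleGraph V}

theorem Dart.sum_countP_toProd_eq_fst [Fintype V] (l : List G.Dart) (u : V) :
    ∑ v, l.countP (fun d => d.toProd = (u, v)) = l.countP (fun d => d.fst = u) := by
  induction l with
  | nil => simp
  | cons a l ih =>
    simp only [List.countP_cons, sum_add_distrib, ih, decide_eq_true_eq, add_right_inj]
    by_cases ha : a.fst = u <;> simp [ha, Prod.ext_iff]

theorem Dart.sum_countP_toProd_eq_snd [Fintype V] (l : List G.Dart) (u : V) :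
    ∑ v, l.countP (fun d => d.toProd = (v, u)) = l.countP (fun d => d.snd = u) := by
  induction l with
  | nil => simp
  | cons a l ih =>
    simp only [List.countP_cons, sum_add_distrib, ih, decide_eq_true_eq, add_right_inj]
    by_cases ha : a.snd = u <;> simp [ha, Prod.ext_iff]

theorem Dart.countP_toProd_eq_zero_of_not_adj {u v : V} (h : ¬ G.Adj u v) (l : List G.Dart) :
    l.countP (fun d => d.toProd = (u, v)) = 0 :=
  List.countP_eq_zero.2 fun d _ hd => h (by simpa [of_decide_eq_true hd] using d.adj)

theorem Dart.countP_toProd_eq_countP_fst {u c : V} (h : ∀ x, G.Adj u x → x = c)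
    (l : List G.Dart) :
    l.countP (fun d => d.toProd = (u, c)) = l.countP (fun d => d.fst = u) :=
  List.countP_congr fun d _ => by
    simpa [Prod.ext_iff] using fun hd => h _ (hd ▸ d.adj)

theorem Dart.countP_toProd_eq_countP_snd {u c : V} (h : ∀ x, G.Adj x u → x = c)
    (l : List G.Dart) :
    l.countP (fun d => d.toProd = (c, u)) = l.countP (fun d => d.snd = u) :=
  List.countP_congr fun d _ => by
    simpa [Prod.ext_iff] using fun hd => h _ (hd ▸ d.adj)

theorem Walk.countP_snd_sub_countP_fst {s t : V} (w : G.Walk s t) (x : V) :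
    (w.darts.countP (fun d => d.snd = x) : ℤ) - w.darts.countP (fun d => d.fst = x)
      = (if x = t then 1 else 0) - (if x = s then 1 else 0) := by
  induction w with
  | nil => simp
  | cons h p ih =>
    simp only [Walk.darts_cons, List.countP_cons]
    push_cast
    split_ifs at * <;> simp_all <;> omega

end SimpleGraph

section Star

variable {V : Type} [DecidableEq V]

theorem starGraph_eq (c : V) : starGraph c = SimpleGraph.starGraph c := by
  ext
  simp [starGraph]

theorem connected_starGraph (c : V) : (starGraph c).Connected :=
  starGraph_eq c ▸ SimpleGraph.connected_starGraph c

theorem eq_center_of_starGraph_adj {c u x : V} (hu : u ≠ c) (h : (starGraph c).Adj u x) :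
    x = c :=
  h.2.resolve_left hu

theorem sub_countP_darts_starGraph {c s t u : V} (w : (starGraph c).Walk s t) (hu : u ≠ c) :
    (w.darts.countP (fun d => d.toProd = (c, u)) : ℝ)
        - w.darts.countP (fun d => d.toProd = (u, c))
      = (if u = t then 1 else 0) - (if u = s then 1 else 0) := by
  rw [SimpleGraph.Dart.countP_toProd_eq_countP_snd fun x h => eq_center_of_starGraph_adj hu h.symm,
    SimpleGraph.Dart.countP_toProd_eq_countP_fst fun x h => eq_center_of_starGraph_adj hu h]
  exact_mod_cast w.countP_snd_sub_countP_fst u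

end Star

/-- `φ i u` models the total balance held by node `u` before transaction `i`, over all its
channels, and `κ u` the total capacity of those channels. -/
structure IsNodeSchedule {V : Type} [DecidableEq V] (n : ℕ) (src tgt : ℕ → V) (amt : ℕ → ℝ)
    (κ : V → ℝ) (φ : ℕ → V → ℝ) : Prop where
  nonneg : ∀ i u, 0 ≤ φ i u
  le_cap : ∀ i u, φ i u ≤ κ u
  succ : ∀ i < n, ∀ u,
    φ (i + 1) u = φ i u + amt i * ((if u = tgt i then 1 else 0) - (if u = src i then 1 else 0))

namespace ACSolution

variable {V : Type} [Fintype V] [DecidableEq V] {H : SimpleGraph V} {n : ℕ} {src tgt : ℕ → V}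
  {amt : ℕ → ℝ}

def funds (sol : ACSolution H n src tgt amt) (i : ℕ) (u : V) : ℝ :=
  ∑ v, sol.bal i u v

variable (sol : ACSolution H n src tgt amt)

theorem funds_succ {i : ℕ} (hi : i < n) (u : V) :
    sol.funds (i + 1) u = sol.funds i u
      + amt i * ((if u = tgt i then 1 else 0) - (if u = src i then 1 else 0)) := by
  have hflow : ((sol.walk i).darts.countP (fun d => d.snd = u) : ℝ)
      - (sol.walk i).darts.countP (fun d => d.fst = u)
      = (if u = tgt i then 1 else 0) - (if u = src i then 1 else 0) := by
    exact_mod_cast (sol.walk i).countP_snd_sub_countP_fst u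
  simp only [funds, sol.bal_step i hi, sum_add_distrib, sum_sub_distrib, ← mul_sum,
    ← List.countP_eq_length_filter, ← Nat.cast_sum, SimpleGraph.Dart.sum_countP_toProd_eq_fst,
    SimpleGraph.Dart.sum_countP_toProd_eq_snd]
  linear_combination amt i * hflow

theorem isNodeSchedule_funds :
    IsNodeSchedule n src tgt amt (fun u => ∑ v, sol.cap u v) sol.funds where
  nonneg i u := sum_nonneg fun v _ => sol.bal_nonneg i u v
  le_cap i u := sum_le_sum fun v _ => by linarith [sol.bal_cap i u v, sol.bal_nonneg i v u]
  succ _ hi := sol.funds_succ hi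

end ACSolution

section StarSolution

variable {V : Type} [Fintype V] [DecidableEq V] {n : ℕ} {src tgt : ℕ → V} {amt : ℕ → ℝ}
  {κ : V → ℝ} {φ : ℕ → V → ℝ}

noncomputable def starSolution (c : V) (hφ : IsNodeSchedule n src tgt amt κ φ) :
    ACSolution (starGraph c) n src tgt amt where
  cap u v := if u ≠ c ∧ v = c then κ u else if u = c ∧ v ≠ c then κ v else 0
  cap_symm u v := by by_cases hu : u = c <;> by_cases hv : v = c <;> simp [hu, hv]
  cap_nonneg u v := by
    have hκ u : 0 ≤ κ u := (hφ.nonneg 0 u).trans (hφ.le_cap 0 u)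
    split_ifs <;> simp [hκ]
  cap_support u v h := by
    simp only [starGraph, not_and_or, not_not] at h
    split_ifs <;> grind
  walk i := ((connected_starGraph c).preconnected (src i) (tgt i)).some
  bal i u v := if u ≠ c ∧ v = c then φ i u else if u = c ∧ v ≠ c then κ v - φ i v else 0
  bal_nonneg i u v := by
    split_ifs <;> linarith [hφ.nonneg i u, hφ.le_cap i v]
  bal_cap i u v := by by_cases hu : u = c <;> by_cases hv : v = c <;> simp [hu, hv]
  bal_step i hi u v := by
    have hflow {x} (hx : x ≠ c) :=
      sub_countP_darts_starGraph ((connected_starGraph c).preconnected (src i) (tgt i)).some hx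
    simp only [← List.countP_eq_length_filter]
    by_cases hu : u = c <;> by_cases hv : v = c
    · simp [hu, hv, SimpleGraph.Dart.countP_toProd_eq_zero_of_not_adj ((starGraph c).irrefl)]
    · simp [hu, hv, hφ.succ i hi]
      linear_combination amt i * hflow hv
    · simp [hu, hv, hφ.succ i hi]
      linear_combination -amt i * hflow hu
    · have hnadj : ¬ (starGraph c).Adj u v := fun h => h.2.elim hu hv
      simp [hu, hv, SimpleGraph.Dart.countP_toProd_eq_zero_of_not_adj hnadj,
        SimpleGraph.Dart.countP_toProd_eq_zero_of_not_adj (mt SimpleGraph.Adj.symm hnadj)]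

theorem sum_cap_starSolution (c : V) (hφ : IsNodeSchedule n src tgt amt κ φ) :
    ∑ u, ∑ v, (starSolution c hφ).cap u v = 2 * ∑ u ∈ univ.erase c, κ u := by
  have h_leaf : ∀ u ∈ univ.erase c, ∑ v, (starSolution c hφ).cap u v = κ u := by
    intro u hu
    simp [starSolution, (mem_erase.1 hu).1]
  have h_center : ∑ v, (starSolution c hφ).cap c v = ∑ u ∈ univ.erase c, κ u := by
    simp only [starSolution, ne_eq, not_true_eq_false, false_and, if_false, true_and]
    rw [← sum_filter, filter_ne']
  rw [← sum_erase_add _ _ (mem_univ c), sum_congr rfl h_leaf, h_center, two_mul]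

theorem ACcost_starGraph_le (c : V) (hφ : IsNodeSchedule n src tgt amt κ φ) :
    ACcost (starGraph c) n src tgt amt ≤ ENNReal.ofReal (∑ u, κ u) := by
  refine (iInf_le _ (starSolution c hφ)).trans (ENNReal.ofReal_le_ofReal ?_)
  rw [sum_cap_starSolution, mul_div_cancel_left₀ _ two_ne_zero]
  exact sum_le_sum_of_subset_of_nonneg (erase_subset c univ)
    fun u _ _ => (hφ.nonneg 0 u).trans (hφ.le_cap 0 u)

end StarSolution

theorem ACcost_star_le_two_mul_general {V : Type} [Fintype V] [DecidableEq V]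
    (c : V) (G : SimpleGraph V)
    (n : ℕ) (src tgt : ℕ → V) (amt : ℕ → ℝ) :
    ACcost (starGraph c) n src tgt amt ≤ 2 * ACcost G n src tgt amt := by
  rw [ACcost.eq_1 G, ENNReal.mul_iInf_of_ne two_ne_zero ENNReal.ofNat_ne_top]
  refine le_iInf fun sol => ?_
  calc ACcost (starGraph c) n src tgt amt
      ≤ ENNReal.ofReal (∑ u, ∑ v, sol.cap u v) := ACcost_starGraph_le c sol.isNodeSchedule_funds
    _ = 2 * ENNReal.ofReal ((∑ u, ∑ v, sol.cap u v) / 2) := by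
      rw [← ENNReal.ofReal_ofNat 2, ← ENNReal.ofReal_mul zero_le_two,
        mul_div_cancel₀ _ two_ne_zero]

/-- For any graph `G` on `p ≥ 2` nodes, the star `K_{1,p-1}` is a
2-approximation of the optimal capacity cost when all transactions must be
accepted: `AC(S, K_{1,p-1}) ≤ 2 · AC(S, G)`. -/
theorem ACcost_star_le_two_mul {V : Type} [Fintype V] [DecidableEq V]
    (hp : 2 ≤ Fintype.card V) (c : V) (G : SimpleGraph V)
    (n : ℕ) (src tgt : ℕ → V) (amt : ℕ → ℝ) (hamt : ∀ i < n, 0 < amt i) :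
    ACcost (starGraph c) n src tgt amt ≤ 2 * ACcost G n src tgt amt :=
  ACcost_star_le_two_mul_general c G n src tgt amt
end
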